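/- arXiv:2503.02694 — 2 statements merged into one kernel-verified Lean document; each statement's English description precedes it below -/
import Mathlib

section
/- For every n ≥ 2, the underlying directed cycle (v_0, v_1, …, v_{n−1}) of the auxiliary cycle of order n is a strong-cycle of the auxiliary cycle, i.e., every vertex v_i admits a temporal v_i,v_i-path using exactly the arc set of the cycle. -/
/-- A temporal walk skeleton with `q` arcs: vertices `v 0, …, v q` and times
`t 0, …, t (q-1)` (so `t i` is the time used on the arc from `v i` to `v (i+1)`). -/
structure TWalk (V : Type*) where
  q : ℕ
  v : Fin (q + 1) → V
  t : Fin q → ℕ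

namespace TWalk

variable {V : Type*}

/-- The first vertex of a walk. -/
def first (W : TWalk V) : V := W.v 0

/-- The last vertex of a walk. -/
def last (W : TWalk V) : V := W.v (Fin.last W.q)

/-- The arrival time (i.e. the last time) of a walk. -/
def arrival (W : TWalk V) : ℕ :=
  if h : 0 < W.q then W.t ⟨W.q - 1, by omega⟩ else 0

/-- `W` is a (non-strict) temporal walk in the temporal digraph `(D, lam)`:
it has at least one arc, consecutive vertices are joined by arcs of `D`, each
time belongs to the time set of the corresponding arc, and the times are
non-decreasing. -/
def IsWalk (D : V → V → Prop) (lam : V → V → Finset ℕ) (W : TWalk V) : Prop :=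
  1 ≤ W.q ∧
  (∀ i : Fin W.q,
      D (W.v i.castSucc) (W.v i.succ) ∧ W.t i ∈ lam (W.v i.castSucc) (W.v i.succ)) ∧
  ∀ i j : Fin W.q, i ≤ j → W.t i ≤ W.t j

/-- `W` is a strict temporal walk in the temporal digraph `(D, lam)`:
as `IsWalk` but with strictly increasing times. -/
def IsStrictWalk (D : V → V → Prop) (lam : V → V → Finset ℕ) (W : TWalk V) : Prop :=
  1 ≤ W.q ∧
  (∀ i : Fin W.q,
      D (W.v i.castSucc) (W.v i.succ) ∧ W.t i ∈ lam (W.v i.castSucc) (W.v i.succ)) ∧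
  ∀ i j : Fin W.q, i < j → W.t i < W.t j

/-- The set of arcs used by a walk. -/
def arcs (W : TWalk V) : Set (V × V) :=
  {p | ∃ i : Fin W.q, p = (W.v i.castSucc, W.v i.succ)}

/-- The set of temporal arcs (arc-time pairs) used by a walk. -/
def tarcs (W : TWalk V) : Set ((V × V) × ℕ) :=
  {p | ∃ i : Fin W.q, p = ((W.v i.castSucc, W.v i.succ), W.t i)}

/-- `W` is a temporal `x,y`-path: a temporal walk from `x` to `y` with all of its
vertices pairwise distinct. -/
def IsPath (D : V → V → Prop) (lam : V → V → Finset ℕ) (x y : V) (W : TWalk V) : Prop :=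
  W.IsWalk D lam ∧ W.first = x ∧ W.last = y ∧ Function.Injective W.v

/-- `W` is a temporal `x,x`-path: a closed temporal walk at `x` whose first `q`
vertices are pairwise distinct. -/
def IsClosedPath (D : V → V → Prop) (lam : V → V → Finset ℕ) (x : V) (W : TWalk V) : Prop :=
  W.IsWalk D lam ∧ W.first = x ∧ W.last = x ∧
    Function.Injective fun i : Fin W.q => W.v i.castSucc

/-- `W` is a strict temporal `x,x`-path. -/
def IsStrictClosedPath (D : V → V → Prop) (lam : V → V → Finset ℕ) (x : V)
    (W : TWalk V) : Prop :=
  W.IsStrictWalk D lam ∧ W.first = x ∧ W.last = x ∧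
    Function.Injective fun i : Fin W.q => W.v i.castSucc

end TWalk

/-- A cycle skeleton on `q` vertices. -/
structure DiCycle (V : Type*) where
  q : ℕ
  v : Fin q → V

namespace DiCycle

variable {V : Type*}

/-- The cyclic successor of an index. -/
def next (C : DiCycle V) (i : Fin C.q) : Fin C.q :=
  ⟨(i.val + 1) % C.q, Nat.mod_lt _ i.pos⟩

/-- `C` is a cycle of the digraph `D`: it has at least two pairwise distinct
vertices and consecutive vertices (cyclically) are joined by arcs of `D`. -/
def IsCycle (D : V → V → Prop) (C : DiCycle V) : Prop :=
  2 ≤ C.q ∧ Function.Injective C.v ∧ ∀ i : Fin C.q, D (C.v i) (C.v (C.next i))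

/-- The vertex set of a cycle. -/
def vertices (C : DiCycle V) : Set V := Set.range C.v

/-- The arc set of a cycle. -/
def arcs (C : DiCycle V) : Set (V × V) :=
  {p | ∃ i : Fin C.q, p = (C.v i, C.v (C.next i))}

end DiCycle

variable {V : Type*}

/-- `(D, lam)` is a temporal digraph: `D` is loopless and `lam` assigns a
nonempty finite set of times to every arc. -/
def IsTemporalDigraph (D : V → V → Prop) (lam : V → V → Finset ℕ) : Prop :=
  (∀ u, ¬ D u u) ∧ ∀ u w, D u w → (lam u w).Nonempty

/-- `C` is a simple-cycle of `(D, lam)`: some vertex of `C` admits a temporal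
`x,x`-path using exactly the arcs of `C`. -/
def IsSimpleCycle (D : V → V → Prop) (lam : V → V → Finset ℕ) (C : DiCycle V) : Prop :=
  ∃ x ∈ C.vertices, ∃ P : TWalk V, P.IsClosedPath D lam x ∧ P.arcs = C.arcs

/-- `C` is a weak-cycle of `(D, lam)`: there are distinct vertices `x, y` of `C`,
a temporal `x,y`-path and a temporal `y,x`-path whose arc sets union to the arcs
of `C`. -/
def IsWeakCycle (D : V → V → Prop) (lam : V → V → Finset ℕ) (C : DiCycle V) : Prop :=
  ∃ x ∈ C.vertices, ∃ y ∈ C.vertices, x ≠ y ∧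
    ∃ P P' : TWalk V, P.IsPath D lam x y ∧ P'.IsPath D lam y x ∧
      P.arcs ∪ P'.arcs = C.arcs

/-- `C` is a strong-cycle of `(D, lam)`: every vertex of `C` admits a temporal
`x,x`-path using exactly the arcs of `C`. -/
def IsStrongCycle (D : V → V → Prop) (lam : V → V → Finset ℕ) (C : DiCycle V) : Prop :=
  ∀ x ∈ C.vertices, ∃ P : TWalk V, P.IsClosedPath D lam x ∧ P.arcs = C.arcs

/-- The arc relation of the directed cycle on `Fin n`: there is an arc from
`v_{i-1}` to `v_i` for each `i`, cyclically (so also from `v_{n-1}` to `v_0`). -/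
def auxD (n : ℕ) : Fin n → Fin n → Prop :=
  fun u w => (u.val + 1) % n = w.val

/-- The time sets of the auxiliary cycle of order `n`, keyed by the head vertex
of the arc: `lam(e_0) = {0, n, 2n, …, (n-1)n}` on the arc into `v_0`, and
`lam(e_i) = {n-i, 2n-i, …, (n-1)n - i}` on the arc into `v_i` for `1 ≤ i ≤ n-1`. -/
def auxLam (n : ℕ) : Fin n → Fin n → Finset ℕ :=
  fun _ w =>
    if w.val = 0 then (Finset.range n).image fun k => k * n
    else (Finset.Icc 1 (n - 1)).image fun k => k * n - w.val

/-- The temporal `v_i,v_i`-path `W_{v_i}` of the auxiliary cycle of order `n`: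
it visits `v_i, v_{i+1}, …, v_{n-1}, v_0, …, v_i` and its `j`-th time
(`1`-indexed) is `t_i^j = j(n-1) - i`. -/
def auxWalk (n : ℕ) (i : Fin n) : TWalk (Fin n) where
  q := n
  v := fun j => ⟨(i.val + j.val) % n, Nat.mod_lt _ i.pos⟩
  t := fun j => (j.val + 1) * (n - 1) - i.val

/-- The underlying directed cycle `(v_0, v_1, …, v_{n-1})` of the auxiliary
cycle of order `n`. -/
def auxCycle (n : ℕ) : DiCycle (Fin n) := ⟨n, id⟩

/-! The path from `v_i` runs once around the cycle and uses the time
`(j+1)(n-1) - i = (j+1)n - (i+j+1)` on its `j`-th arc (counting from `0`). That arc enters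
`v_{(i+j+1) mod n}`, whose times are the multiples of `n` below `n²` shifted down by the index of
the head; reducing `i+j+1` modulo `n` only lowers the multiplier of `n` by one, which keeps it in
range. Consecutive times differ by `n - 1 ≥ 0`, so the walk is temporal. -/

variable {n : ℕ}

lemma auxCycle_isCycle (hn : 2 ≤ n) : (auxCycle n).IsCycle (auxD n) :=
  ⟨hn, Function.injective_id, fun _ => rfl⟩

lemma auxWalk_v_castSucc (i j : Fin n) : (auxWalk n i).v (j.castSucc : Fin (n + 1)) = i + j :=
  Fin.ext (Fin.val_add i j).symm

lemma auxWalk_v_succ (i j : Fin n) :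
    (auxWalk n i).v (j.succ : Fin (n + 1)) = (auxCycle n).next (i + j) :=
  Fin.ext <| by simp [auxWalk, auxCycle, DiCycle.next, Fin.val_add, ← add_assoc]

lemma auxWalk_first (i : Fin n) : (auxWalk n i).first = i :=
  Fin.ext <| by simp [TWalk.first, auxWalk, Nat.mod_eq_of_lt i.isLt]

lemma auxWalk_last (i : Fin n) : (auxWalk n i).last = i :=
  Fin.ext <| by simp [TWalk.last, auxWalk, Nat.mod_eq_of_lt i.isLt]

lemma auxWalk_t_monotone (i : Fin n) : Monotone (auxWalk n i).t := fun _ _ hjk =>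
  Nat.sub_le_sub_right (Nat.mul_le_mul_right _ (Nat.succ_le_succ hjk)) _

lemma auxWalk_injective (i : Fin n) :
    Function.Injective fun j : Fin n => (auxWalk n i).v (j.castSucc : Fin (n + 1)) := by
  have := NeZero.of_pos i.pos
  simpa only [auxWalk_v_castSucc] using add_right_injective i

lemma auxWalk_arcs (i : Fin n) : (auxWalk n i).arcs = (auxCycle n).arcs := by
  have := NeZero.of_pos i.pos
  ext p
  constructor
  · rintro ⟨(j : Fin n), rfl⟩
    exact ⟨i + j, Prod.ext (auxWalk_v_castSucc i j) (auxWalk_v_succ i j)⟩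
  · rintro ⟨(a : Fin n), rfl⟩
    have hai : i + (a - i) = a := add_sub_cancel i a
    refine ⟨a - i, (Prod.ext ?_ ?_).symm⟩
    · exact (auxWalk_v_castSucc i (a - i)).trans hai
    · exact (auxWalk_v_succ i (a - i)).trans (congrArg _ hai)

lemma mem_auxLam_of_val_eq_zero {k : ℕ} (hk : k < n) (u : Fin n) {w : Fin n} (hw : w.val = 0) :
    k * n ∈ auxLam n u w := by
  simp only [auxLam, hw, if_true, Finset.mem_image, Finset.mem_range]
  exact ⟨k, hk, rfl⟩

lemma mem_auxLam_of_val_ne_zero {k : ℕ} (hk₁ : 1 ≤ k) (hk₂ : k ≤ n - 1) (u : Fin n) {w : Fin n}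
    (hw : w.val ≠ 0) : k * n - w ∈ auxLam n u w := by
  simp only [auxLam, hw, if_false, Finset.mem_image, Finset.mem_Icc]
  exact ⟨k, ⟨hk₁, hk₂⟩, rfl⟩

lemma auxWalk_t (i j : Fin n) : (auxWalk n i).t j = (j + 1) * n - (i + j + 1) := by
  have : j.val ≤ j * n := Nat.le_mul_of_pos_right _ j.pos
  simp only [auxWalk, Nat.mul_sub_one, add_mul, one_mul]
  omega

lemma auxWalk_t_mem_auxLam (i j u w : Fin n) (hw : w.val = (i + j + 1) % n) :
    (auxWalk n i).t j ∈ auxLam n u w := by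
  rw [auxWalk_t]
  rcases lt_trichotomy (i + j + 1 : ℕ) n with hlt | heq | hgt
  · rw [Nat.mod_eq_of_lt hlt] at hw
    rw [← hw]
    exact mem_auxLam_of_val_ne_zero (by omega) (by omega) u (by omega)
  · rw [heq, Nat.mod_self] at hw
    rw [heq, add_mul, one_mul, Nat.add_sub_cancel]
    exact mem_auxLam_of_val_eq_zero j.isLt u hw
  · rw [Nat.mod_eq_sub_mod hgt.le, Nat.mod_eq_of_lt (by omega)] at hw
    convert mem_auxLam_of_val_ne_zero (k := j) (w := w) (by omega) (by omega) u (by omega) using 1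
    rw [hw, add_mul, one_mul]
    omega

lemma auxWalk_isClosedPath (i : Fin n) : (auxWalk n i).IsClosedPath (auxD n) (auxLam n) i := by
  refine ⟨⟨i.pos, fun (j : Fin n) => ?_, fun _ _ => (auxWalk_t_monotone i ·)⟩,
    auxWalk_first i, auxWalk_last i, auxWalk_injective i⟩
  -- the arc index lives in `Fin (auxWalk n i).q`, which is `Fin n` only up to unfolding
  erw [auxWalk_v_castSucc i j, auxWalk_v_succ i j]
  exact ⟨rfl, auxWalk_t_mem_auxLam i j _ _ (by simp [auxCycle, DiCycle.next, Fin.val_add])⟩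

/-- For every `n ≥ 2`, the underlying directed cycle
`(v_0, …, v_{n-1})` of the auxiliary cycle of order `n` is a cycle of the
underlying digraph and a strong-cycle of the auxiliary cycle. -/
theorem auxCycle_isStrongCycle (n : ℕ) (hn : 2 ≤ n) :
    (auxCycle n).IsCycle (auxD n) ∧
    IsStrongCycle (auxD n) (auxLam n) (auxCycle n) :=
  ⟨auxCycle_isCycle hn, fun x _ => ⟨auxWalk n x, auxWalk_isClosedPath x, auxWalk_arcs x⟩⟩
end

section
/- Let D be a finite simple directed graph in which every cycle has length at least 5 (girth at least 5). Then there exists a temporization λ assigning to each arc of D a nonempty finite set of natural-number times such that the temporal digraph (D, λ) contains no weak-cycle. -/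
variable {V : Type*}

/-! Rank the vertices injectively by `f : V → [0, n)` and give an arc `u → w` the single time
`2n - f w` if it goes up (`f u < f w`) and `f w` if it goes down. Two consecutive arcs of a
temporal path can then only go down and then up, so no temporal path has three arcs. A
weak-cycle is covered by two temporal paths, hence has at most four arcs, which girth at least
five forbids. -/

open Function

section RankTemporization

variable (f : V → ℕ) (n : ℕ)

def rankTime (u w : V) : ℕ := if f u < f w then 2 * n - f w else f w

def rankTemporization (u w : V) : Finset ℕ := {rankTime f n u w}

variable {f n}

theorem rankTime_valley {a b c : V} (hb : f b < n) (hab : f a ≠ f b) (hbc : f b ≠ f c)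
    (h : rankTime f n a b ≤ rankTime f n b c) : f b < f a ∧ f b < f c := by
  unfold rankTime at h
  split_ifs at h <;> omega

theorem TWalk.IsWalk.q_le_two_of_rankTemporization {D : V → V → Prop} {W : TWalk V}
    (hf : Injective f) (hfn : ∀ v, f v < n) (hW : W.IsWalk D (rankTemporization f n))
    (hinj : Injective W.v) : W.q ≤ 2 := by
  by_contra! hq
  obtain ⟨-, harc, hmono⟩ := hW
  have hne : ∀ i j : Fin (W.q + 1), i ≠ j → f (W.v i) ≠ f (W.v j) :=
    fun i j hij h => hij (hinj (hf h))
  have htime : ∀ i : Fin W.q, W.t i = rankTime f n (W.v i.castSucc) (W.v i.succ) :=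
    fun i => Finset.mem_singleton.mp (harc i).2
  have valley : ∀ k (hk : k + 1 < W.q),
      f (W.v ⟨k + 1, by omega⟩) < f (W.v ⟨k, by omega⟩) ∧
      f (W.v ⟨k + 1, by omega⟩) < f (W.v ⟨k + 2, by omega⟩) := by
    intro k hk
    have h := hmono ⟨k, by omega⟩ ⟨k + 1, hk⟩ (by simp [Fin.le_def])
    rw [htime, htime] at h
    exact rankTime_valley (hfn _) (hne _ _ (by simp [Fin.ext_iff]))
      (hne _ _ (by simp [Fin.ext_iff])) h
  have h1 : f (W.v ⟨1, by omega⟩) < f (W.v ⟨2, by omega⟩) := (valley 0 (by omega)).2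
  have h2 : f (W.v ⟨2, by omega⟩) < f (W.v ⟨1, by omega⟩) := (valley 1 (by omega)).1
  omega

end RankTemporization

theorem TWalk.ncard_arcs_le (W : TWalk V) : W.arcs.ncard ≤ W.q := by
  have : W.arcs = Set.range fun i : Fin W.q => (W.v i.castSucc, W.v i.succ) := by
    ext p; simp [TWalk.arcs, eq_comm]
  rw [this, ← Set.image_univ]
  exact (Set.ncard_image_le Set.finite_univ).trans (by simp)

theorem DiCycle.ncard_arcs {C : DiCycle V} (hC : Injective C.v) : C.arcs.ncard = C.q := by
  have : C.arcs = Set.range fun i => (C.v i, C.v (C.next i)) := by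
    ext p; simp [DiCycle.arcs, eq_comm]
  rw [this, Set.ncard_range_of_injective fun i j h => hC (congrArg Prod.fst h)]
  simp

theorem DiCycle.q_le_of_arcs_eq_union {C : DiCycle V} (hC : Injective C.v) {P P' : TWalk V}
    (h : P.arcs ∪ P'.arcs = C.arcs) : C.q ≤ P.q + P'.q :=
  calc C.q = (P.arcs ∪ P'.arcs).ncard := by rw [h, DiCycle.ncard_arcs hC]
    _ ≤ P.arcs.ncard + P'.arcs.ncard := Set.ncard_union_le _ _
    _ ≤ P.q + P'.q := add_le_add P.ncard_arcs_le P'.ncard_arcs_le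

theorem weak_acyclic_temporization_of_girth_ge_five_general (V : Type*) [Fintype V]
    (D : V → V → Prop)
    (hgirth : ∀ C : DiCycle V, C.IsCycle D → 5 ≤ C.q) :
    ∃ lam : V → V → Finset ℕ, (∀ u w, D u w → (lam u w).Nonempty) ∧
      ¬ ∃ C : DiCycle V, C.IsCycle D ∧ IsWeakCycle D lam C := by
  set f : V → ℕ := fun v => Fintype.equivFin V v
  have hf : Injective f := Fin.val_injective.comp (Fintype.equivFin V).injective
  have hfn : ∀ v, f v < Fintype.card V := fun v => (Fintype.equivFin V v).isLt
  refine ⟨rankTemporization f (Fintype.card V), fun _ _ _ => Finset.singleton_nonempty _, ?_⟩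
  rintro ⟨C, hC, _, _, _, _, _, P, P', hP, hP', harcs⟩
  have hP2 := hP.1.q_le_two_of_rankTemporization hf hfn hP.2.2.2
  have hP'2 := hP'.1.q_le_two_of_rankTemporization hf hfn hP'.2.2.2
  have := DiCycle.q_le_of_arcs_eq_union hC.2.1 harcs
  have := hgirth C hC
  omega

/-- If every cycle of a finite simple digraph `D` has length at
least 5 (girth at least 5), then there is a temporization assigning a nonempty
finite set of times to each arc such that `(D, lam)` contains no weak-cycle. -/
theorem weak_acyclic_temporization_of_girth_ge_five (V : Type*) [Fintype V]
    (D : V → V → Prop) (hloop : ∀ u, ¬ D u u)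
    (hgirth : ∀ C : DiCycle V, C.IsCycle D → 5 ≤ C.q) :
    ∃ lam : V → V → Finset ℕ, (∀ u w, D u w → (lam u w).Nonempty) ∧
      ¬ ∃ C : DiCycle V, C.IsCycle D ∧ IsWeakCycle D lam C :=
  weak_acyclic_temporization_of_girth_ge_five_general V D hgirth
end
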